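/- Let V be a group and U a finite normal subgroup. Consider the permutation σ of U given by σ(a) = v⁻¹ a v u for fixed v ∈ V and u ∈ U. Then the minimal length m of a cycle of σ divides |U|, and every element a lying in a cycle of minimal length satisfies σ^{|U|}(a) = a. -/

import Mathlib

/-!
Since `σ^k x = v⁻ᵏ x vᵏ · σ^k 1`, two fixed points `x, a` of `σ^m` differ by an element
`x a⁻¹` of `U` commuting with `vᵐ`: the fixed points of `σ^m` form a coset of the subgroup
`C_U(vᵐ)`, so their number divides `|U|`. By minimality of `m` each of them has exact period
`m`, so they split into `σ`-cycles of length `m` and `m` divides their number.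
-/

open Function MulAction Subgroup

namespace Equiv.Perm

variable {α : Type*}

theorem minimalPeriod_subtypePerm (τ : Perm α) {p : α → Prop} (h : ∀ x, p (τ x) ↔ p x)
    (x : Subtype p) : minimalPeriod (τ.subtypePerm h) x = minimalPeriod τ x := by
  have hval : Semiconj Subtype.val (τ.subtypePerm h) τ := fun _ => rfl
  refine minimalPeriod_eq_minimalPeriod_iff.2 fun n => ?_
  simp only [IsPeriodicPt, IsFixedPt, Subtype.ext_iff, hval.iterate_right n x]

variable [Finite α]

theorem dvd_card_of_forall_minimalPeriod_eq (τ : Perm α) {n : ℕ}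
    (h : ∀ x, minimalPeriod τ x = n) : n ∣ Nat.card α := by
  have := Fintype.ofFinite (orbitRel.Quotient (zpowers τ) α)
  have horbit (x : α) : Nat.card (orbit (zpowers τ) x) = n := by
    have := Fintype.ofFinite (orbit (zpowers τ) x)
    rw [← h x, Nat.card_eq_fintype_card]
    exact (MulAction.minimalPeriod_eq_card τ x).symm
  rw [Nat.card_congr (selfEquivSigmaOrbits (zpowers τ) α), Nat.card_sigma]
  exact Finset.dvd_sum fun ω _ => (horbit ω.out).symm.dvd

theorem dvd_card_minimalPeriod_eq (τ : Perm α) (n : ℕ) :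
    n ∣ Nat.card {x // minimalPeriod τ x = n} := by
  have hτ (x : α) : minimalPeriod τ (τ x) = minimalPeriod τ x :=
    minimalPeriod_apply (τ.injective.mem_periodicPts x)
  refine (τ.subtypePerm fun x => by rw [hτ]).dvd_card_of_forall_minimalPeriod_eq fun x => ?_
  rw [minimalPeriod_subtypePerm]
  exact x.2

end Equiv.Perm

section AffineConj

variable {G : Type*} [Group G] (g c : G)

theorem iterate_conj_mul_apply (k : ℕ) (x : G) :
    (fun y => g⁻¹ * y * g * c)^[k] x =
      (g ^ k)⁻¹ * x * g ^ k * (fun y => g⁻¹ * y * g * c)^[k] 1 := by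
  induction k with
  | zero => simp
  | succ k ih =>
    simp only [iterate_succ_apply', ih, pow_succ]
    group

theorem iterate_conj_mul_eq_self_iff {k : ℕ} {a : G}
    (ha : (fun y => g⁻¹ * y * g * c)^[k] a = a) (x : G) :
    (fun y => g⁻¹ * y * g * c)^[k] x = x ↔ x * a⁻¹ ∈ centralizer {g ^ k} := by
  rw [iterate_conj_mul_apply] at ha ⊢
  -- `ha` determines the translation part `f^[k] 1` in terms of `a`
  rw [eq_inv_mul_iff_mul_eq.2 ha, mem_centralizer_singleton_iff]
  have hconj : (g ^ k)⁻¹ * x * g ^ k * (((g ^ k)⁻¹ * a * g ^ k)⁻¹ * a) =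
      (g ^ k)⁻¹ * (x * a⁻¹ * g ^ k) * a := by group
  rw [hconj, ← eq_mul_inv_iff_mul_eq, inv_mul_eq_iff_eq_mul]

end AffineConj

theorem brauer_key_step_general (V : Type*) [Group V] (U : Subgroup V) [Finite U]
    (v : V) (u : U) (σ : U → U)
    (hσ : ∀ a : U, (σ a : V) = v⁻¹ * (a : V) * v * (u : V))
    (m : ℕ) (hm : 0 < m) (hex : ∃ a : U, σ^[m] a = a)
    (hmin : ∀ k : ℕ, 0 < k → (∃ a : U, σ^[k] a = a) → m ≤ k) :
    m ∣ Nat.card U ∧ ∀ a : U, σ^[m] a = a → σ^[Nat.card U] a = a := by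
  obtain ⟨a, ha⟩ := hex
  have hval : Semiconj Subtype.val σ (fun y => v⁻¹ * y * v * u) := hσ
  have hinj : Injective σ := fun x y hxy =>
    Subtype.ext (by simpa [hσ] using congrArg Subtype.val hxy)
  have hfix_iff (x : U) : σ^[m] x = x ↔ x * a⁻¹ ∈ (centralizer {v ^ m}).subgroupOf U := by
    rw [mem_subgroupOf, Subtype.ext_iff, hval.iterate_right m x]
    exact iterate_conj_mul_eq_self_iff v u (by rw [← hval.iterate_right m a, ha]) x
  have hperiod (x : U) : σ^[m] x = x ↔ minimalPeriod σ x = m := by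
    refine ⟨fun hx => ?_, fun hx => hx ▸ iterate_minimalPeriod⟩
    have hx : IsPeriodicPt σ m x := hx
    exact le_antisymm (Nat.le_of_dvd hm hx.minimalPeriod_dvd)
      (hmin _ (hx.minimalPeriod_pos hm) ⟨x, iterate_minimalPeriod⟩)
  have hcard : m ∣ Nat.card {x : U // σ^[m] x = x} := by
    simp only [hperiod]
    exact Equiv.Perm.dvd_card_minimalPeriod_eq (Equiv.ofBijective σ hinj.bijective_of_finite) m
  have hdvd : m ∣ Nat.card U := by
    rw [Nat.card_congr (Equiv.subtypeEquiv (Equiv.mulRight a⁻¹) hfix_iff)] at hcard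
    exact hcard.trans (card_subgroup_dvd_card _)
  exact ⟨hdvd, fun b hb => IsPeriodicPt.trans_dvd hb hdvd⟩

theorem brauer_key_step (V : Type*) [Group V] (U : Subgroup V) [U.Normal] [Finite U]
    (v : V) (u : U) (σ : U → U)
    (hσ : ∀ a : U, (σ a : V) = v⁻¹ * (a : V) * v * (u : V))
    (m : ℕ) (hm : 0 < m) (hex : ∃ a : U, σ^[m] a = a)
    (hmin : ∀ k : ℕ, 0 < k → (∃ a : U, σ^[k] a = a) → m ≤ k) :
    m ∣ Nat.card U ∧ ∀ a : U, σ^[m] a = a → σ^[Nat.card U] a = a :=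
  brauer_key_step_general V U v u σ hσ m hm hex hmin
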